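/- Let $u^1,u^2:[0,+\infty)\to\mathrm{Dom}\phi$ be continuous solutions of EVI$_\lambda$. Then $d(u^1_t,u^2_t)\le e^{-\lambda(t-s)}\,d(u^1_s,u^2_s)$ for every $0\le s<t<\infty$. In particular, for every initial datum $u_0\in\overline{\mathrm{Dom}\phi}$ there is at most one solution of EVI$_\lambda$ with $\lim_{t\downarrow0}u_t=u_0$. -/

import Mathlib

/-- Upper right Dini derivative, with values in `EReal`. -/
noncomputable def upperDiniDeriv (f : ℝ → ℝ) (t : ℝ) : EReal :=
  Filter.limsup (fun h => (((f (t + h) - f t) / h : ℝ) : EReal)) (nhdsWithin 0 (Set.Ioi 0))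

/-- `E_λ(t) = ∫₀ᵗ e^{λ r} dr`. -/
noncomputable def Elam (lam t : ℝ) : ℝ :=
  if lam = 0 then t else (Real.exp (lam * t) - 1) / lam

/-- The pointwise `EVI_λ` differential inequality at time `t`. -/
noncomputable def EVIineq {X : Type*} [MetricSpace X]
    (φ : X → EReal) (lam : ℝ) (u : ℝ → X) (t : ℝ) : Prop :=
  ∀ v : X, φ v ≠ ⊤ →
    ((1 / 2 : ℝ) : EReal) * upperDiniDeriv (fun s => dist (u s) v ^ 2) t +
      ((lam / 2 * dist (u t) v ^ 2 : ℝ) : EReal) ≤ φ v - φ (u t)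

/-- A solution of `EVI_λ` on `(0, ∞)`: a continuous curve with values in `Dom φ`
satisfying the `EVI_λ` differential inequality. -/
noncomputable def IsEVISolution {X : Type*} [MetricSpace X]
    (φ : X → EReal) (lam : ℝ) (u : ℝ → X) : Prop :=
  ContinuousOn u (Set.Ioi 0) ∧ (∀ t ∈ Set.Ioi (0:ℝ), φ (u t) ≠ ⊤) ∧
  ∀ t ∈ Set.Ioi (0:ℝ), EVIineq φ lam u t

/-!
Integrating the EVI with the fencing theorem for Dini derivatives gives
`e^{λ(b-a)} d(u_b, v)² - d(u_a, v)² ≤ 2 E_λ(b-a) (φ v - φ u_b)`, since `t ↦ φ (u_t)` is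
nonincreasing. Applying it to `u¹` and `u²` alternately over a step `[p, q]`, in both orders, the
mixed values of `φ` cancel on averaging, so `e^{2λt} d(u¹_t, u²_t)²` grows over `[p, q]` by at most
`C (q - p) (Φ p - Φ q)` with `Φ = φ ∘ u¹ + φ ∘ u²` nonincreasing; on a uniform partition of `[s, t]`
with `n` steps these bounds telescope to `O(1/n)`. The case `s = 0` and uniqueness follow by
letting `s ↓ 0`.
-/

open Real Set Filter Topology

theorem Elam_zero_right (lam : ℝ) : Elam lam 0 = 0 := by
  simp [Elam]

theorem hasDerivAt_Elam (lam t : ℝ) : HasDerivAt (Elam lam) (exp (lam * t)) t := by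
  by_cases h : lam = 0
  · have : Elam lam = id := funext fun _ => if_pos h
    rw [this]
    simpa [h] using hasDerivAt_id t
  · have : Elam lam = fun t => (exp (lam * t) - 1) / lam := funext fun _ => if_neg h
    rw [this]
    refine (((((hasDerivAt_id' t).const_mul lam).exp).sub_const 1).div_const lam).congr_deriv ?_
    field_simp

theorem Elam_le_exp_mul (lam : ℝ) {t : ℝ} (ht : 0 ≤ t) : Elam lam t ≤ exp (|lam| * t) * t := by
  have := (convex_Icc 0 t).image_sub_le_mul_sub_of_deriv_le (C := exp (|lam| * t))
    (fun r _ => (hasDerivAt_Elam lam r).continuousAt.continuousWithinAt)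
    (fun r _ => (hasDerivAt_Elam lam r).differentiableAt.differentiableWithinAt)
    (fun r hr => by
      rw [interior_Icc] at hr
      rw [(hasDerivAt_Elam lam r).deriv]
      exact exp_le_exp.2 (by nlinarith [le_abs_self lam, abs_nonneg lam, hr.1, hr.2]))
    0 (left_mem_Icc.2 ht) t (right_mem_Icc.2 ht) ht
  simpa [Elam_zero_right] using this

theorem eventually_slope_lt_of_upperDiniDeriv_lt {f : ℝ → ℝ} {x r : ℝ}
    (h : upperDiniDeriv f x < r) : ∀ᶠ z in 𝓝[>] x, slope f x z < r := by
  have key : ∀ᶠ δ in 𝓝[>] (0 : ℝ), slope f x (x + δ) < r := by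
    filter_upwards [eventually_lt_of_limsup_lt h] with δ hδ
    rw [slope_def_field, add_sub_cancel_left]
    exact_mod_cast hδ
  have hshift : 𝓝[>] x = map (x + ·) (𝓝[>] 0) := by rw [map_add_left_nhdsGT, add_zero]
  rw [hshift]
  exact key

theorem exp_mul_le_of_upperDiniDeriv_le {f : ℝ → ℝ} {a b C lam : ℝ} (hab : a ≤ b)
    (hf : ContinuousOn f (Icc a b))
    (hD : ∀ x ∈ Ico a b, upperDiniDeriv f x ≤ ((C - lam * f x : ℝ) : EReal)) :
    exp (lam * (b - a)) * f b ≤ f a + C * Elam lam (b - a) := by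
  -- `B` solves `B' = C' - λ B` with `B a = f a`; since `C' > C`, `f` cannot cross it.
  have fenced : ∀ C' > C, exp (lam * (b - a)) * f b ≤ f a + C' * Elam lam (b - a) := by
    intro C' hC'
    set B : ℝ → ℝ := fun x => exp (-lam * (x - a)) * (f a + C' * Elam lam (x - a))
    have hB : ∀ x, HasDerivAt B (C' - lam * B x) x := by
      intro x
      have hsub := (hasDerivAt_id' x).sub_const a
      refine (((hsub.const_mul (-lam)).exp).mul
        ((((hasDerivAt_Elam lam (x - a)).comp x hsub).const_mul C').const_add (f a))).congr_deriv ?_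
      have : exp (-lam * (x - a)) * exp (lam * (x - a)) = 1 := by
        rw [← exp_add, neg_mul, neg_add_cancel, exp_zero]
      simp only [B, Function.comp]
      linear_combination C' * this
    have hfB := image_le_of_liminf_slope_right_lt_deriv_boundary hf
      (fun x hx r hr => (eventually_slope_lt_of_upperDiniDeriv_lt
        ((hD x hx).trans_lt (EReal.coe_lt_coe_iff.2 hr))).frequently)
      (by simp [B, Elam_zero_right]) hB
      (fun x _ hfx => by rw [hfx]; linarith) (right_mem_Icc.2 hab)
    have hexp : exp (lam * (b - a)) * exp (-lam * (b - a)) = 1 := by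
      rw [← exp_add, neg_mul, add_neg_cancel, exp_zero]
    calc exp (lam * (b - a)) * f b ≤ exp (lam * (b - a)) * B b :=
          mul_le_mul_of_nonneg_left hfB (exp_pos _).le
      _ = f a + C' * Elam lam (b - a) := by
          simp only [B]; rw [← mul_assoc, hexp, one_mul]
  have hlim : Tendsto (fun C' => f a + C' * Elam lam (b - a)) (𝓝[>] C)
      (𝓝 (f a + C * Elam lam (b - a))) :=
    (Continuous.tendsto (by fun_prop) C).mono_left nhdsWithin_le_nhds
  exact ge_of_tendsto hlim (eventually_nhdsWithin_of_forall fenced)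

theorem le_of_forall_sub_le_mul_mul_sub {g Φ : ℝ → ℝ} {s t K : ℝ} (hst : s ≤ t)
    (h : ∀ p q, s ≤ p → p ≤ q → q ≤ t → g q - g p ≤ K * (q - p) * (Φ p - Φ q)) :
    g t ≤ g s := by
  have partition : ∀ n : ℕ, 0 < n → g t - g s ≤ K * (t - s) * (Φ s - Φ t) / n := by
    intro n hn
    set δ := (t - s) / n
    set p : ℕ → ℝ := fun i => s + i * δ
    have hδ : 0 ≤ δ := div_nonneg (sub_nonneg.2 hst) n.cast_nonneg
    have hpn : p n = t := by simp only [p, δ]; field_simp; ring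
    have hp_le : ∀ i ≤ n, p i ≤ t := fun i hi => hpn ▸ by
      simp only [p]; gcongr
    have hstep : ∀ i, p (i + 1) - p i = δ := fun i => by simp only [p]; push_cast; ring
    calc g t - g s = ∑ i ∈ Finset.range n, (g (p (i + 1)) - g (p i)) := by
          rw [Finset.sum_range_sub (fun i => g (p i)), hpn]; simp [p]
      _ ≤ ∑ i ∈ Finset.range n, K * δ * (Φ (p i) - Φ (p (i + 1))) := by
          refine Finset.sum_le_sum fun i hi => ?_
          have := h (p i) (p (i + 1)) (le_add_of_nonneg_right (mul_nonneg i.cast_nonneg hδ))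
            (by linarith [hstep i]) (hp_le _ (Finset.mem_range.1 hi))
          rwa [hstep] at this
      _ = K * (t - s) * (Φ s - Φ t) / n := by
          rw [← Finset.mul_sum, Finset.sum_range_sub' (fun i => Φ (p i)), hpn]
          simp only [p, δ]; ring_nf
  have hlim := tendsto_const_div_atTop_nhds_zero_nat (K * (t - s) * (Φ s - Φ t))
  exact sub_nonpos.1 (ge_of_tendsto hlim ((eventually_gt_atTop 0).mono partition))

namespace IsEVISolution

variable {X : Type*} [MetricSpace X] {φ : X → EReal} {lam : ℝ} {u u₁ u₂ : ℝ → X}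

theorem upperDiniDeriv_dist_sq_le (hbot : ∀ y, φ y ≠ ⊥) (hu : IsEVISolution φ lam u)
    {t : ℝ} (ht : 0 < t) {v : X} (hv : φ v ≠ ⊤) :
    upperDiniDeriv (fun s => dist (u s) v ^ 2) t ≤
      ((2 * ((φ v).toReal - (φ (u t)).toReal) - lam * dist (u t) v ^ 2 : ℝ) : EReal) := by
  have hevi := hu.2.2 t ht v hv
  rw [← EReal.coe_toReal hv (hbot v), ← EReal.coe_toReal (hu.2.1 t ht) (hbot _),
    ← EReal.coe_sub] at hevi
  generalize upperDiniDeriv (fun s => dist (u s) v ^ 2) t = D at hevi ⊢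
  induction D using EReal.rec with
  | bot => exact bot_le
  | coe d =>
    rw [← EReal.coe_mul, ← EReal.coe_add, EReal.coe_le_coe_iff] at hevi
    exact EReal.coe_le_coe_iff.2 (by linarith)
  | top =>
    rw [EReal.mul_top_of_pos (by norm_num), EReal.top_add_coe, top_le_iff] at hevi
    exact absurd hevi (EReal.coe_ne_top _)

theorem exp_mul_dist_sq_le_of_le (hbot : ∀ y, φ y ≠ ⊥) (hu : IsEVISolution φ lam u)
    {v : X} (hv : φ v ≠ ⊤) {a b c : ℝ} (ha : 0 < a) (hab : a ≤ b)
    (hc : ∀ x ∈ Ico a b, c ≤ (φ (u x)).toReal) :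
    exp (lam * (b - a)) * dist (u b) v ^ 2 ≤
      dist (u a) v ^ 2 + 2 * ((φ v).toReal - c) * Elam lam (b - a) := by
  refine exp_mul_le_of_upperDiniDeriv_le (f := fun x => dist (u x) v ^ 2) hab ?_ fun x hx => ?_
  · have := hu.1.mono ((Icc_subset_Ioi_iff hab).2 ha)
    fun_prop
  · refine (hu.upperDiniDeriv_dist_sq_le hbot (ha.trans_le hx.1) hv).trans ?_
    exact EReal.coe_le_coe_iff.2 (by linarith [hc x hx])

theorem antitoneOn_toReal (hbot : ∀ y, φ y ≠ ⊥) (hlsc : LowerSemicontinuous φ)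
    (hu : IsEVISolution φ lam u) : AntitoneOn (fun t => (φ (u t)).toReal) (Ioi 0) := by
  intro a (ha : 0 < a) b _ hab
  set S := Icc a b ∩ u ⁻¹' (φ ⁻¹' Iic (φ (u a)))
  have hS : IsClosed S := (hu.1.mono ((Icc_subset_Ioi_iff hab).2 ha)).preimage_isClosed_of_isClosed
    isClosed_Icc (hlsc.isClosed_preimage _)
  have hSbdd : BddAbove S := bddAbove_Icc.mono inter_subset_left
  -- At the last time `r ≤ b` with `φ (u r) ≤ φ (u a)`, the EVI with `v = u r` freezes `u` on
  -- `[r, b]`, because `φ (u r) ≤ φ (u x)` there.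
  set r := sSup S
  have hr : r ∈ S := hS.csSup_mem ⟨a, left_mem_Icc.2 hab, (le_rfl : φ (u a) ≤ φ (u a))⟩ hSbdd
  have hr0 : 0 < r := ha.trans_le hr.1.1
  have hafter : ∀ x ∈ Ico r b, (φ (u r)).toReal ≤ (φ (u x)).toReal := by
    rintro x ⟨hrx, hxb⟩
    rcases hrx.eq_or_lt with rfl | hrx
    · rfl
    have hxS : x ∉ S := fun hx => (le_csSup hSbdd hx).not_gt hrx
    have hlt : φ (u a) < φ (u x) :=
      not_le.1 fun h => hxS ⟨⟨hr.1.1.trans hrx.le, hxb.le⟩, h⟩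
    exact EReal.toReal_le_toReal ((mem_Iic.1 hr.2).trans hlt.le) (hbot _)
      (hu.2.1 x (hr0.trans hrx))
  have hfrozen := hu.exp_mul_dist_sq_le_of_le hbot (hu.2.1 r hr0) hr0 hr.1.2 hafter
  simp only [dist_self, ne_eq, OfNat.ofNat_ne_zero, not_false_eq_true, zero_pow, sub_self,
    mul_zero, zero_mul, add_zero] at hfrozen
  have hub : u b = u r := by
    have hsq := le_antisymm (nonpos_of_mul_nonpos_right hfrozen (exp_pos _)) (sq_nonneg _)
    exact dist_eq_zero.1 (pow_eq_zero_iff two_ne_zero |>.1 hsq)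
  show (φ (u b)).toReal ≤ (φ (u a)).toReal
  rw [hub]
  exact EReal.toReal_le_toReal hr.2 (hbot _) (hu.2.1 a ha)

theorem exp_mul_dist_sq_le (hbot : ∀ y, φ y ≠ ⊥) (hlsc : LowerSemicontinuous φ)
    (hu : IsEVISolution φ lam u) {v : X} (hv : φ v ≠ ⊤) {a b : ℝ} (ha : 0 < a) (hab : a ≤ b) :
    exp (lam * (b - a)) * dist (u b) v ^ 2 ≤
      dist (u a) v ^ 2 + 2 * ((φ v).toReal - (φ (u b)).toReal) * Elam lam (b - a) :=
  hu.exp_mul_dist_sq_le_of_le hbot hv ha hab fun _ hx =>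
    hu.antitoneOn_toReal hbot hlsc (ha.trans_le hx.1) (ha.trans_le hab) hx.2.le

theorem exp_two_mul_dist_sq_le (hbot : ∀ y, φ y ≠ ⊥) (hlsc : LowerSemicontinuous φ)
    (h₁ : IsEVISolution φ lam u₁) (h₂ : IsEVISolution φ lam u₂) {p q : ℝ} (hp : 0 < p)
    (hpq : p ≤ q) :
    exp (2 * lam * (q - p)) * dist (u₁ q) (u₂ q) ^ 2 ≤ dist (u₁ p) (u₂ p) ^ 2 +
      ((φ (u₁ p)).toReal + (φ (u₂ p)).toReal - ((φ (u₁ q)).toReal + (φ (u₂ q)).toReal)) *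
        Elam lam (q - p) := by
  have hq := hp.trans_le hpq
  have h₁p := h₁.exp_mul_dist_sq_le hbot hlsc (h₂.2.1 p hp) hp hpq
  have h₂q := h₂.exp_mul_dist_sq_le hbot hlsc (h₁.2.1 q hq) hp hpq
  have h₂p := h₂.exp_mul_dist_sq_le hbot hlsc (h₁.2.1 p hp) hp hpq
  have h₁q := h₁.exp_mul_dist_sq_le hbot hlsc (h₂.2.1 q hq) hp hpq
  rw [dist_comm (u₂ q) (u₁ q), dist_comm (u₂ p) (u₁ q)] at h₂q
  rw [dist_comm (u₂ q) (u₁ p), dist_comm (u₂ p) (u₁ p)] at h₂p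
  have hexp : exp (2 * lam * (q - p)) = exp (lam * (q - p)) * exp (lam * (q - p)) := by
    rw [← exp_add]; ring_nf
  have hpos := (exp_pos (lam * (q - p))).le
  rw [hexp]
  linarith [mul_le_mul_of_nonneg_left h₂q hpos, mul_le_mul_of_nonneg_left h₁q hpos]

theorem exp_two_mul_mul_dist_sq_le (hbot : ∀ y, φ y ≠ ⊥) (hlsc : LowerSemicontinuous φ)
    (h₁ : IsEVISolution φ lam u₁) (h₂ : IsEVISolution φ lam u₂) {s t : ℝ} (hs : 0 < s)
    (hst : s ≤ t) :
    exp (2 * lam * t) * dist (u₁ t) (u₂ t) ^ 2 ≤ exp (2 * lam * s) * dist (u₁ s) (u₂ s) ^ 2 := by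
  set Φ : ℝ → ℝ := fun r => (φ (u₁ r)).toReal + (φ (u₂ r)).toReal
  have hΦ : AntitoneOn Φ (Ioi 0) :=
    (h₁.antitoneOn_toReal hbot hlsc).add (h₂.antitoneOn_toReal hbot hlsc)
  refine le_of_forall_sub_le_mul_mul_sub (g := fun r => exp (2 * lam * r) * dist (u₁ r) (u₂ r) ^ 2)
    (Φ := Φ) (K := exp (3 * |lam| * t)) hst fun p q hsp hpq hqt => ?_
  have hp := hs.trans_le hsp
  have hΔ : 0 ≤ Φ p - Φ q := sub_nonneg.2 (hΦ hp (hp.trans_le hpq) hpq)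
  have hweight : exp (2 * lam * p) * Elam lam (q - p) ≤ exp (3 * |lam| * t) * (q - p) :=
    calc exp (2 * lam * p) * Elam lam (q - p)
        ≤ exp (2 * lam * p) * (exp (|lam| * (q - p)) * (q - p)) :=
          mul_le_mul_of_nonneg_left (Elam_le_exp_mul lam (sub_nonneg.2 hpq)) (exp_pos _).le
      _ = exp (2 * lam * p + |lam| * (q - p)) * (q - p) := by rw [exp_add]; ring
      _ ≤ exp (3 * |lam| * t) * (q - p) := by
          gcongr
          nlinarith [le_abs_self lam, abs_nonneg lam]
  calc exp (2 * lam * q) * dist (u₁ q) (u₂ q) ^ 2 - exp (2 * lam * p) * dist (u₁ p) (u₂ p) ^ 2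
      = exp (2 * lam * p) *
          (exp (2 * lam * (q - p)) * dist (u₁ q) (u₂ q) ^ 2 - dist (u₁ p) (u₂ p) ^ 2) := by
        rw [mul_sub, ← mul_assoc, ← exp_add]; ring_nf
    _ ≤ exp (2 * lam * p) * ((Φ p - Φ q) * Elam lam (q - p)) := by
        gcongr
        linarith [h₁.exp_two_mul_dist_sq_le hbot hlsc h₂ hp hpq]
    _ = exp (2 * lam * p) * Elam lam (q - p) * (Φ p - Φ q) := by ring
    _ ≤ exp (3 * |lam| * t) * (q - p) * (Φ p - Φ q) := mul_le_mul_of_nonneg_right hweight hΔ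

theorem dist_le_exp_mul_dist (hbot : ∀ y, φ y ≠ ⊥) (hlsc : LowerSemicontinuous φ)
    (h₁ : IsEVISolution φ lam u₁) (h₂ : IsEVISolution φ lam u₂) {s t : ℝ} (hs : 0 < s)
    (hst : s ≤ t) :
    dist (u₁ t) (u₂ t) ≤ exp (-lam * (t - s)) * dist (u₁ s) (u₂ s) := by
  refine (pow_le_pow_iff_left₀ dist_nonneg (by positivity) two_ne_zero).1 ?_
  set d := dist (u₁ t) (u₂ t)
  calc d ^ 2 = exp (-(2 * lam * t)) * (exp (2 * lam * t) * d ^ 2) := by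
        rw [← mul_assoc, ← exp_add, neg_add_cancel, exp_zero, one_mul]
    _ ≤ exp (-(2 * lam * t)) * (exp (2 * lam * s) * dist (u₁ s) (u₂ s) ^ 2) := by
        exact mul_le_mul_of_nonneg_left (h₁.exp_two_mul_mul_dist_sq_le hbot hlsc h₂ hs hst)
          (exp_pos _).le
    _ = (exp (-lam * (t - s)) * dist (u₁ s) (u₂ s)) ^ 2 := by
        rw [mul_pow, sq (exp _), ← mul_assoc, ← exp_add, ← exp_add]
        ring_nf

theorem dist_le_exp_mul_dist_of_tendsto (hbot : ∀ y, φ y ≠ ⊥) (hlsc : LowerSemicontinuous φ)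
    (h₁ : IsEVISolution φ lam u₁) (h₂ : IsEVISolution φ lam u₂) {x₁ x₂ : X}
    (hx₁ : Tendsto u₁ (𝓝[>] 0) (𝓝 x₁)) (hx₂ : Tendsto u₂ (𝓝[>] 0) (𝓝 x₂)) {t : ℝ} (ht : 0 < t) :
    dist (u₁ t) (u₂ t) ≤ exp (-lam * t) * dist x₁ x₂ := by
  have hexp : Tendsto (fun s => exp (-lam * (t - s))) (𝓝[>] 0) (𝓝 (exp (-lam * t))) := by
    simpa using (Continuous.tendsto (f := fun s : ℝ => exp (-lam * (t - s))) (by fun_prop) 0)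
      |>.mono_left nhdsWithin_le_nhds
  refine ge_of_tendsto (hexp.mul (hx₁.dist hx₂)) ?_
  filter_upwards [Ioo_mem_nhdsGT ht] with s hs
  exact h₁.dist_le_exp_mul_dist hbot hlsc h₂ hs.1 hs.2.le

end IsEVISolution

theorem stmt10_general {X : Type*} [MetricSpace X] (φ : X → EReal) (lam : ℝ)
    (hbot : ∀ y, φ y ≠ ⊥) (hlsc : LowerSemicontinuous φ) :
    (∀ u₁ u₂ : ℝ → X,
      ContinuousOn u₁ (Set.Ici 0) → ContinuousOn u₂ (Set.Ici 0) →
      (∀ t ∈ Set.Ici (0:ℝ), φ (u₁ t) ≠ ⊤) → (∀ t ∈ Set.Ici (0:ℝ), φ (u₂ t) ≠ ⊤) →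
      IsEVISolution φ lam u₁ → IsEVISolution φ lam u₂ →
      ∀ s t : ℝ, 0 ≤ s → s < t →
        dist (u₁ t) (u₂ t) ≤ Real.exp (-lam * (t - s)) * dist (u₁ s) (u₂ s)) ∧
    (∀ u₀ : X, u₀ ∈ closure {y : X | φ y ≠ ⊤} →
      ∀ u v : ℝ → X, IsEVISolution φ lam u → IsEVISolution φ lam v →
        Filter.Tendsto u (nhdsWithin 0 (Set.Ioi 0)) (nhds u₀) →
        Filter.Tendsto v (nhdsWithin 0 (Set.Ioi 0)) (nhds u₀) →
        ∀ t ∈ Set.Ioi (0:ℝ), u t = v t) := by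
  refine ⟨fun u₁ u₂ hc₁ hc₂ _ _ h₁ h₂ s t hs hst => ?_,
    fun u₀ _ u v hu hv hu₀ hv₀ t ht => ?_⟩
  · rcases hs.eq_or_lt with rfl | hs
    · have hright : 𝓝[>] (0 : ℝ) ≤ 𝓝[Ici 0] 0 := nhdsWithin_mono _ Ioi_subset_Ici_self
      rw [sub_zero]
      exact h₁.dist_le_exp_mul_dist_of_tendsto hbot hlsc h₂
        ((hc₁ 0 self_mem_Ici).mono_left hright) ((hc₂ 0 self_mem_Ici).mono_left hright) hst
    · exact h₁.dist_le_exp_mul_dist hbot hlsc h₂ hs hst.le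
  · have := hu.dist_le_exp_mul_dist_of_tendsto hbot hlsc hv hu₀ hv₀ ht
    rwa [dist_self, mul_zero, dist_le_zero] at this

theorem stmt10 {X : Type*} [MetricSpace X] (φ : X → EReal) (lam : ℝ)
    (hbot : ∀ y, φ y ≠ ⊥) (hproper : ∃ y, φ y ≠ ⊤) (hlsc : LowerSemicontinuous φ) :
    (∀ u₁ u₂ : ℝ → X,
      ContinuousOn u₁ (Set.Ici 0) → ContinuousOn u₂ (Set.Ici 0) →
      (∀ t ∈ Set.Ici (0:ℝ), φ (u₁ t) ≠ ⊤) → (∀ t ∈ Set.Ici (0:ℝ), φ (u₂ t) ≠ ⊤) →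
      IsEVISolution φ lam u₁ → IsEVISolution φ lam u₂ →
      ∀ s t : ℝ, 0 ≤ s → s < t →
        dist (u₁ t) (u₂ t) ≤ Real.exp (-lam * (t - s)) * dist (u₁ s) (u₂ s)) ∧
    (∀ u₀ : X, u₀ ∈ closure {y : X | φ y ≠ ⊤} →
      ∀ u v : ℝ → X, IsEVISolution φ lam u → IsEVISolution φ lam v →
        Filter.Tendsto u (nhdsWithin 0 (Set.Ioi 0)) (nhds u₀) →
        Filter.Tendsto v (nhdsWithin 0 (Set.Ioi 0)) (nhds u₀) →
        ∀ t ∈ Set.Ioi (0:ℝ), u t = v t) :=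
  stmt10_general φ lam hbot hlsc
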